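/- For a cluster 𝒜 (a finite collection of finite subsets of ℕ whose adjacency graph with edges {A, A'} for dist(A, A') ≤ 1 is connected), one has ∑_{A ∈ 𝒜} d(A) ≥ d(𝒜), where d(A) = 1 + max A − min A and d(𝒜) = 1 + max(∪_{A∈𝒜} A) − min(∪_{A∈𝒜} A). Consequently, if every A ∈ 𝒜 satisfies d(A) ≥ 2, then ∏_{A ∈ 𝒜} d(A)^α ≥ d(𝒜)^α for every α > 0. -/

import Mathlib

/-!
`d(𝒜)` counts the points of `[min ⋃ 𝒜, max ⋃ 𝒜]`. Following a chain of adjacent sets from one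
containing the minimum to one containing the maximum, these points are covered by the intervals
`[min A, max A]`, `A ∈ 𝒜`, which have `d(A)` points each. For the product bound, a sum of factors
`≥ 2` is at most their product, and `x ↦ x ^ α` is monotone.
-/

open scoped BigOperators ENNReal
attribute [local instance] Classical.propDecidable

noncomputable section

/-- Two finite subsets of `ℕ` are adjacent iff their distance is at most `1`. -/
def adjP (A B : Finset ℕ) : Prop := ∃ a ∈ A, ∃ b ∈ B, a ≤ b + 1 ∧ b ≤ a + 1

/-- The diameter `d(A) = 1 + max A − min A` of a finite subset of `ℕ`. -/
def diamP (A : Finset ℕ) : ℕ := 1 + (A.max).unbotD 0 - (A.min).untopD 0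

/-- A collection of polymers is a cluster: its adjacency graph is connected. -/
def clusterConn (𝒜 : Finset (Finset ℕ)) : Prop :=
  ∀ A ∈ 𝒜, ∀ B ∈ 𝒜, Relation.ReflTransGen (fun X Y => X ∈ 𝒜 ∧ Y ∈ 𝒜 ∧ adjP X Y) A B

/-- The graph on vertex set `V` with edge set `E` is connected. -/
def connectedOn (V : Finset (Finset ℕ)) (E : Finset (Sym2 (Finset ℕ))) : Prop :=
  ∀ x ∈ V, ∀ y ∈ V, Relation.ReflTransGen (fun u v => s(u, v) ∈ E) x y

/-- The truncated (cluster) weight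
`w^T(𝒜) = ∑_{connected graphs G on 𝒜} (−1)^{|E(G)|} ∏_{{A,A'} ∈ E(G)} 1[A ∼ A'] ∏_{A ∈ 𝒜} w(A)`. -/
def truncWeight (w : Finset ℕ → ℂ) (𝒜 : Finset (Finset ℕ)) : ℂ :=
  ∑ E ∈ ((𝒜.sym2.filter fun e => ¬ e.IsDiag).powerset.filter fun E => connectedOn 𝒜 E),
    (-1 : ℂ) ^ E.card
      * (∏ e ∈ E, if ∀ X Y : Finset ℕ, e = s(X, Y) → adjP X Y then (1 : ℂ) else 0)
      * ∏ A ∈ 𝒜, w A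

-- `intervalHull ∅ = {0}`, matching `diamP ∅ = 1`.
def intervalHull (A : Finset ℕ) : Finset ℕ := Finset.Icc ((A.min).untopD 0) ((A.max).unbotD 0)

lemma card_intervalHull (A : Finset ℕ) : (intervalHull A).card = diamP A := by
  rw [intervalHull, diamP, Nat.card_Icc, Nat.add_comm]

lemma intervalHull_eq_Icc {A : Finset ℕ} (hA : A.Nonempty) :
    intervalHull A = Finset.Icc (A.min' hA) (A.max' hA) := by
  rw [intervalHull, ← Finset.coe_min' hA, ← Finset.coe_max' hA]
  rfl

lemma Icc_subset_intervalHull {A : Finset ℕ} {a b : ℕ} (ha : a ∈ A) (hb : b ∈ A) :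
    Finset.Icc a b ⊆ intervalHull A := by
  rw [intervalHull_eq_Icc ⟨a, ha⟩]
  exact Finset.Icc_subset_Icc (Finset.min'_le A a ha) (Finset.le_max' A b hb)

lemma one_le_diamP (A : Finset ℕ) : 1 ≤ diamP A := by
  rcases A.eq_empty_or_nonempty with rfl | hA
  · simp [diamP]
  · rw [← card_intervalHull, intervalHull_eq_Icc hA, Nat.card_Icc]
    have hminmax := A.min'_le_max' hA
    omega

/-- If `z` lies left of `min B`, it also lies left of a point of the previous set of the chain,
because adjacent sets are at distance at most `1`. -/
lemma Icc_subset_biUnion_intervalHull_of_reflTransGen {𝒜 : Finset (Finset ℕ)} {A B : Finset ℕ}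
    (hAB : Relation.ReflTransGen (fun X Y => X ∈ 𝒜 ∧ Y ∈ 𝒜 ∧ adjP X Y) A B) (hA : A ∈ 𝒜)
    {a b : ℕ} (ha : a ∈ A) (hb : b ∈ B) : Finset.Icc a b ⊆ 𝒜.biUnion intervalHull := by
  induction hAB generalizing b with
  | refl =>
    exact (Icc_subset_intervalHull ha hb).trans (Finset.subset_biUnion_of_mem intervalHull hA)
  | @tail C B _ hCB ih =>
    obtain ⟨-, hB, c, hc, b', hb', -, hb'c⟩ := hCB
    intro z hz
    rw [Finset.mem_Icc] at hz
    by_cases hzB : B.min' ⟨b, hb⟩ ≤ z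
    · exact Finset.subset_biUnion_of_mem intervalHull hB
        (Icc_subset_intervalHull (B.min'_mem _) hb (Finset.mem_Icc.2 ⟨hzB, hz.2⟩))
    · have hzc : z ≤ c := by
        have hminb' := B.min'_le b' hb'
        omega
      exact ih hc (Finset.mem_Icc.2 ⟨hz.1, hzc⟩)

lemma intervalHull_sup_subset_biUnion {𝒜 : Finset (Finset ℕ)} (hconn : clusterConn 𝒜)
    (hU : (𝒜.sup id).Nonempty) : intervalHull (𝒜.sup id) ⊆ 𝒜.biUnion intervalHull := by
  obtain ⟨A, hA, hmin⟩ := Finset.mem_sup.1 ((𝒜.sup id).min'_mem hU)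
  obtain ⟨B, hB, hmax⟩ := Finset.mem_sup.1 ((𝒜.sup id).max'_mem hU)
  rw [intervalHull_eq_Icc hU]
  exact Icc_subset_biUnion_intervalHull_of_reflTransGen (hconn A hA B hB) hA hmin hmax

theorem diamP_sup_le_sum {𝒜 : Finset (Finset ℕ)} (h𝒜 : 𝒜.Nonempty) (hconn : clusterConn 𝒜) :
    diamP (𝒜.sup id) ≤ ∑ A ∈ 𝒜, diamP A := by
  rcases (𝒜.sup id).eq_empty_or_nonempty with hU | hU
  · obtain ⟨A, hA⟩ := h𝒜
    calc diamP (𝒜.sup id) = 1 := by simp [hU, diamP]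
      _ ≤ diamP A := one_le_diamP A
      _ ≤ ∑ A ∈ 𝒜, diamP A := Finset.single_le_sum (fun _ _ => Nat.zero_le _) hA
  · calc diamP (𝒜.sup id) = (intervalHull (𝒜.sup id)).card := (card_intervalHull _).symm
      _ ≤ (𝒜.biUnion intervalHull).card :=
        Finset.card_le_card (intervalHull_sup_subset_biUnion hconn hU)
      _ ≤ ∑ A ∈ 𝒜, (intervalHull A).card := Finset.card_biUnion_le
      _ = ∑ A ∈ 𝒜, diamP A := Finset.sum_congr rfl fun A _ => card_intervalHull A

theorem Finset.sum_le_prod_of_two_le {ι R : Type*} [CommSemiring R] [LinearOrder R]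
    [IsStrictOrderedRing R] {s : Finset ι} (hs : s.Nonempty) {f : ι → R}
    (hf : ∀ i ∈ s, 2 ≤ f i) : ∑ i ∈ s, f i ≤ ∏ i ∈ s, f i := by
  induction hs using Finset.Nonempty.cons_induction with
  | singleton a => simp
  | cons a s ha hs ih =>
    rw [Finset.sum_cons, Finset.prod_cons]
    have ih' := ih fun i hi => hf i (Finset.mem_cons_of_mem hi)
    obtain ⟨i, hi⟩ := hs
    have h2 : 2 ≤ ∏ j ∈ s, f j := calc
      2 ≤ f i := hf i (Finset.mem_cons_of_mem hi)
      _ ≤ ∑ j ∈ s, f j := Finset.single_le_sum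
        (fun j hj => zero_le_two.trans (hf j (Finset.mem_cons_of_mem hj))) hi
      _ ≤ ∏ j ∈ s, f j := ih'
    calc f a + ∑ j ∈ s, f j ≤ f a + ∏ j ∈ s, f j := by gcongr
      _ ≤ f a * ∏ j ∈ s, f j := add_le_mul (hf a (Finset.mem_cons_self a s)) h2

theorem cluster_diameter_bound_general (𝒜 : Finset (Finset ℕ)) (h𝒜 : 𝒜.Nonempty)
    (hconn : clusterConn 𝒜) :
    (diamP (𝒜.sup id) ≤ ∑ A ∈ 𝒜, diamP A)
    ∧ (∀ α : ℝ, 0 < α → (∀ A ∈ 𝒜, 2 ≤ diamP A) →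
        ((diamP (𝒜.sup id) : ℝ)) ^ α ≤ ∏ A ∈ 𝒜, ((diamP A : ℝ)) ^ α) := by
  refine ⟨diamP_sup_le_sum h𝒜 hconn, fun α hα h2 => ?_⟩
  have hprod : (diamP (𝒜.sup id) : ℝ) ≤ ∏ A ∈ 𝒜, (diamP A : ℝ) := by
    exact_mod_cast (diamP_sup_le_sum h𝒜 hconn).trans (Finset.sum_le_prod_of_two_le h𝒜 h2)
  rw [Real.finsetProd_rpow 𝒜 _ (fun A _ => Nat.cast_nonneg _)]
  exact Real.rpow_le_rpow (Nat.cast_nonneg _) hprod hα.le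

/-- For a nonempty cluster `𝒜` of nonempty polymers, `∑_{A ∈ 𝒜} d(A) ≥ d(𝒜)`;
consequently if every `A ∈ 𝒜` has `d(A) ≥ 2`, then `∏_{A ∈ 𝒜} d(A)^α ≥ d(𝒜)^α`
for every `α > 0`. -/
theorem cluster_diameter_bound (𝒜 : Finset (Finset ℕ)) (h𝒜 : 𝒜.Nonempty)
    (hne : ∀ A ∈ 𝒜, A.Nonempty) (hconn : clusterConn 𝒜) :
    (diamP (𝒜.sup id) ≤ ∑ A ∈ 𝒜, diamP A)
    ∧ (∀ α : ℝ, 0 < α → (∀ A ∈ 𝒜, 2 ≤ diamP A) →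
        ((diamP (𝒜.sup id) : ℝ)) ^ α ≤ ∏ A ∈ 𝒜, ((diamP A : ℝ)) ^ α) :=
  cluster_diameter_bound_general 𝒜 h𝒜 hconn
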